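/- Let Σ be a finite alphabet, p ∈ Σ* a fixed word, and L = p·Σ^{≥2}. If u ∈ p·Σ (i.e., u = p·a for some letter a) and u ∼_L u', then u' ∈ p·Σ. -/

import Mathlib

/-- Syntactic congruence of a language `L ⊆ Σ*`. -/
def SynCong {α : Type*} (L : Set (List α)) (u v : List α) : Prop :=
  ∀ x y : List α, (x ++ u ++ y) ∈ L ↔ (x ++ v ++ y) ∈ L

/-- `p·Σ⁺`: words strictly extending `p`. -/
def plusLang {α : Type*} (p : List α) : Set (List α) :=
  {w | ∃ s : List α, s ≠ [] ∧ w = p ++ s}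

/-- `p·Σ^{≥2}`: words extending `p` by at least two letters. -/
def geTwoLang {α : Type*} (p : List α) : Set (List α) :=
  {w | ∃ s : List α, 2 ≤ s.length ∧ w = p ++ s}

/-- `w·Σ*`: words having `w` as a prefix. -/
def starLang {α : Type*} (w : List α) : Set (List α) :=
  {u | ∃ s : List α, u = w ++ s}

/-!
Appending a letter to `p·a` lands in `L`, while `p·a` itself is not in `L`. Both facts transfer
to `u'`: the first forces `u'` to extend `p` by at least one letter, the second by at most one.
-/

namespace SynCong

variable {α : Type*} {L : Set (List α)} {u v : List α}

theorem append_mem_iff (h : SynCong L u v) (y : List α) : u ++ y ∈ L ↔ v ++ y ∈ L := by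
  simpa using h [] y

theorem mem_iff (h : SynCong L u v) : u ∈ L ↔ v ∈ L := by
  simpa using h.append_mem_iff []

end SynCong

section GeTwoLang

variable {α : Type*} {p w : List α}

theorem mem_geTwoLang_iff : w ∈ geTwoLang p ↔ p <+: w ∧ p.length + 2 ≤ w.length := by
  constructor
  · rintro ⟨s, hs, rfl⟩
    exact ⟨List.prefix_append _ _, by simpa using hs⟩
  · rintro ⟨⟨s, rfl⟩, hlen⟩
    exact ⟨s, by simpa using hlen, rfl⟩

theorem append_singleton_mem_geTwoLang (p : List α) (a b : α) : p ++ [a] ++ [b] ∈ geTwoLang p :=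
  ⟨[a, b], le_rfl, by simp⟩

theorem append_singleton_notMem_geTwoLang (p : List α) (a : α) : p ++ [a] ∉ geTwoLang p := by
  simp [mem_geTwoLang_iff]

end GeTwoLang

theorem List.IsPrefix.exists_eq_append_singleton {α : Type*} {p w : List α} (h : p <+: w)
    (hlen : w.length = p.length + 1) : ∃ a, w = p ++ [a] := by
  obtain ⟨s, rfl⟩ := h
  obtain ⟨a, rfl⟩ := List.length_eq_one_iff.mp (by simpa using hlen)
  exact ⟨a, rfl⟩

theorem stmt2_general {α : Type*} (p u u' : List α) (a : α)
    (hu : u = p ++ [a]) (hcong : SynCong (geTwoLang p) u u') :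
    ∃ a' : α, u' = p ++ [a'] := by
  subst hu
  have hext := (hcong.append_mem_iff [a]).mp (append_singleton_mem_geTwoLang p a a)
  have hnot : u' ∉ geTwoLang p := hcong.mem_iff.not.mp (append_singleton_notMem_geTwoLang p a)
  rw [mem_geTwoLang_iff] at hext hnot
  obtain ⟨hext_pre, hext_len⟩ := hext
  rw [List.length_append, List.length_singleton] at hext_len
  have hpre : p <+: u' :=
    List.prefix_of_prefix_length_le hext_pre (List.prefix_append _ _) (by omega)
  have hshort : u'.length < p.length + 2 := not_le.mp fun hlen => hnot ⟨hpre, hlen⟩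
  exact hpre.exists_eq_append_singleton (by omega)

theorem stmt2 {α : Type*} [Fintype α] [Nonempty α] (p u u' : List α) (a : α)
    (hu : u = p ++ [a]) (hcong : SynCong (geTwoLang p) u u') :
    ∃ a' : α, u' = p ++ [a'] :=
  stmt2_general p u u' a hu hcong
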